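/- For every preference profile R on a finite set A of alternatives, a lottery p is SD-efficient at R if and only if every lottery p' whose support is contained in the support of p is SD-efficient at R. -/

import Mathlib

open Classical

noncomputable section

variable {A : Type*} [Fintype A]

/-- A (weak) preference relation: complete and transitive. -/
def IsPref (r : A → A → Prop) : Prop :=
  (∀ x y, r x y ∨ r y x) ∧ ∀ x y z, r x y → r y z → r x z

/-- A lottery over the alternatives. -/
def Lottery (A : Type*) [Fintype A] :=
  {p : A → ℝ // (∀ x, 0 ≤ p x) ∧ ∑ x, p x = 1}

/-- Probability that lottery `p` yields an alternative at least as good as `x` w.r.t. `r`. -/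
def upperSum (r : A → A → Prop) (p : Lottery A) (x : A) : ℝ :=
  ∑ y, if r y x then p.1 y else 0

/-- `p` (weakly) stochastically dominates `q` w.r.t. the preference relation `r`. -/
def SDGe (r : A → A → Prop) (p q : Lottery A) : Prop :=
  ∀ x, upperSum r q x ≤ upperSum r p x

/-- Strict stochastic dominance. -/
def SDGt (r : A → A → Prop) (p q : Lottery A) : Prop :=
  SDGe r p q ∧ ¬ SDGe r q p

/-- A profile assigning a preference relation to each of `n` agents; validity. -/
def ValidProfile {n : ℕ} (R : Fin n → A → A → Prop) : Prop :=
  ∀ i, IsPref (R i)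

/-- `p` is SD-efficient at profile `R`. -/
def SDEfficientAt {n : ℕ} (R : Fin n → A → A → Prop) (p : Lottery A) : Prop :=
  ¬ ∃ q : Lottery A, (∀ i, SDGe (R i) q p) ∧ ∃ i, SDGt (R i) q p

def Anonymous {n : ℕ} (f : (Fin n → A → A → Prop) → Lottery A) : Prop :=
  ∀ R : Fin n → A → A → Prop, ValidProfile R →
    ∀ σ : Equiv.Perm (Fin n), f (R ∘ σ) = f R

/-- Relabel a preference relation by a permutation of the alternatives. -/
def relabel (π : Equiv.Perm A) (r : A → A → Prop) : A → A → Prop :=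
  fun x y => r (π.symm x) (π.symm y)

def relabelProfile {n : ℕ} (π : Equiv.Perm A) (R : Fin n → A → A → Prop) :
    Fin n → A → A → Prop :=
  fun i => relabel π (R i)

def Neutral {n : ℕ} (f : (Fin n → A → A → Prop) → Lottery A) : Prop :=
  ∀ R : Fin n → A → A → Prop, ValidProfile R →
    ∀ (π : Equiv.Perm A) (x : A), (f (relabelProfile π R)).1 (π x) = (f R).1 x

def Efficient {n : ℕ} (f : (Fin n → A → A → Prop) → Lottery A) : Prop :=
  ∀ R : Fin n → A → A → Prop, ValidProfile R → SDEfficientAt R (f R)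

def Strategyproof {n : ℕ} (f : (Fin n → A → A → Prop) → Lottery A) : Prop :=
  ¬ ∃ (R : Fin n → A → A → Prop) (i : Fin n) (r : A → A → Prop),
      ValidProfile R ∧ IsPref r ∧ SDGt (R i) (f (Function.update R i r)) (f R)


/-- The support of a lottery. -/
def supp {A : Type*} [Fintype A] (p : Lottery A) : Set A := {x | 0 < p.1 x}

/-! If `q` SD-dominates `p'` for every agent, strictly for one, then `p + ε • (q - p')` is still a
lottery for small `ε > 0` because `supp p' ⊆ supp p`, and since `upperSum` is affine in the
lottery it dominates `p` in exactly the same way. -/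

open Filter Topology

namespace Lottery

theorem exists_pos_mul_le_of_supp_subset {p p' : Lottery A} (hsub : supp p' ⊆ supp p) :
    ∃ ε : ℝ, 0 < ε ∧ ∀ x, ε * p'.1 x ≤ p.1 x := by
  have hnear : ∀ x, ∀ᶠ ε in 𝓝[>] (0 : ℝ), ε * p'.1 x ≤ p.1 x := by
    intro x
    rcases (p.2.1 x).lt_or_eq with hpx | hpx
    · have hlim : Tendsto (fun ε : ℝ => ε * p'.1 x) (𝓝 0) (𝓝 0) :=
        (continuous_mul_const _).tendsto' 0 0 (zero_mul _)
      exact nhdsWithin_le_nhds ((hlim.eventually (gt_mem_nhds hpx)).mono fun _ => le_of_lt)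
    · have hp'x : p'.1 x = 0 :=
        le_antisymm (not_lt.1 fun h => (hsub h : 0 < p.1 x).ne hpx) (p'.2.1 x)
      exact Eventually.of_forall fun ε => by simp [hp'x, ← hpx]
  exact ((eventually_all.2 hnear).and self_mem_nhdsWithin).exists.imp
    fun ε h => ⟨h.2, h.1⟩

def shift (p q p' : Lottery A) {ε : ℝ} (hε : 0 ≤ ε) (hle : ∀ x, ε * p'.1 x ≤ p.1 x) :
    Lottery A :=
  ⟨fun x => p.1 x + ε * (q.1 x - p'.1 x),
    fun x => by nlinarith [hle x, mul_nonneg hε (q.2.1 x)],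
    by
      rw [Finset.sum_add_distrib, ← Finset.mul_sum, Finset.sum_sub_distrib, p.2.2, q.2.2,
        p'.2.2]
      ring⟩

variable {p q p' : Lottery A} {ε : ℝ} (hε : 0 ≤ ε) (hle : ∀ x, ε * p'.1 x ≤ p.1 x)

theorem upperSum_shift (r : A → A → Prop) (x : A) :
    upperSum r (shift p q p' hε hle) x =
      upperSum r p x + ε * (upperSum r q x - upperSum r p' x) := by
  simp only [upperSum, shift, Finset.mul_sum, ← Finset.sum_sub_distrib, ← Finset.sum_add_distrib]
  refine Finset.sum_congr rfl fun y _ => ?_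
  split_ifs <;> ring

theorem sdGe_shift_left_iff (hεpos : 0 < ε) (r : A → A → Prop) :
    SDGe r (shift p q p' hε hle) p ↔ SDGe r q p' := by
  refine forall_congr' fun x => ?_
  rw [upperSum_shift, le_add_iff_nonneg_right, mul_nonneg_iff_of_pos_left hεpos, sub_nonneg]

theorem sdGe_shift_right_iff (hεpos : 0 < ε) (r : A → A → Prop) :
    SDGe r p (shift p q p' hε hle) ↔ SDGe r p' q := by
  refine forall_congr' fun x => ?_
  rw [upperSum_shift, add_le_iff_nonpos_right, ← mul_zero ε, mul_le_mul_iff_right₀ hεpos,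
    sub_nonpos]

theorem sdGt_shift_iff (hεpos : 0 < ε) (r : A → A → Prop) :
    SDGt r (shift p q p' hε hle) p ↔ SDGt r q p' := by
  rw [SDGt, SDGt, sdGe_shift_left_iff hε hle hεpos, sdGe_shift_right_iff hε hle hεpos]

end Lottery

theorem sd_efficient_iff_support {A : Type*} [Fintype A] {n : ℕ}
    (R : Fin n → A → A → Prop) (p : Lottery A) :
    SDEfficientAt R p ↔ ∀ p' : Lottery A, supp p' ⊆ supp p → SDEfficientAt R p' := by
  refine ⟨fun hp p' hsub ⟨q, hq, i, hi⟩ => ?_, fun h => h p subset_rfl⟩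
  obtain ⟨ε, hε, hle⟩ := Lottery.exists_pos_mul_le_of_supp_subset hsub
  exact hp ⟨Lottery.shift p q p' hε.le hle,
    fun j => (Lottery.sdGe_shift_left_iff hε.le hle hε _).2 (hq j),
    i, (Lottery.sdGt_shift_iff hε.le hle hε _).2 hi⟩

end
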